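/- arXiv:1902.00431 — 3 statements merged into one kernel-verified Lean document; each statement's English description precedes it below -/
import Mathlib

section
/- Let P* be a PABM probability matrix on n nodes with K* communities, true assignment z* and popularity vectors Λ^{(k,l)}, and suppose Assumption A1* holds: for every k ∈ {1,…,K*}, the vectors Λ^{(k,1)}, …, Λ^{(k,K*)} are linearly independent. Then rank(P*) = K*²; in particular, for each community l the columns of P* with indices in {j : z*(j)=l} span a subspace S_l of dimension exactly K*, and these subspaces are independent: dim(S_1 + ⋯ + S_{K*}) = Σ_{l=1}^{K*} dim(S_l) = K*². -/
open MeasureTheory Matrix ProbabilityTheory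

noncomputable def frobSq {m n : Type*} [Fintype m] [Fintype n] (B : Matrix m n ℝ) : ℝ :=
  ∑ i, ∑ j, B i j ^ 2

noncomputable def opNormSq {m n : Type*} [Fintype m] [Fintype n] (B : Matrix m n ℝ) : ℝ :=
  sSup {t : ℝ | ∃ v : n → ℝ, (∑ j, v j ^ 2) = 1 ∧ t = ∑ i, (∑ j, B i j * v j) ^ 2}

noncomputable def opNorm {m n : Type*} [Fintype m] [Fintype n] (B : Matrix m n ℝ) : ℝ :=
  Real.sqrt (opNormSq B)

/-- The `(k,l)` block of a matrix `B` under the community assignment `z`. -/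
def Mblock {n K : ℕ} (B : Matrix (Fin n) (Fin n) ℝ) (z : Fin n → Fin K) (k l : Fin K) :
    Matrix {i : Fin n // z i = k} {j : Fin n // z j = l} ℝ :=
  Matrix.of fun i j => B i.1 j.1

/-- `P` is a Popularity Adjusted Block Model probability matrix with assignment `z`
and popularity matrix `V`. -/
def IsPABM {n K : ℕ} (P : Matrix (Fin n) (Fin n) ℝ) (z : Fin n → Fin K)
    (V : Matrix (Fin n) (Fin K) ℝ) : Prop :=
  (∀ i k, V i k ∈ Set.Icc (0 : ℝ) 1) ∧ ∀ i j, P i j = V i (z j) * V j (z i)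

/-- `A` is a random symmetric adjacency matrix with independent Bernoulli entries
with means `P` on the (closed) upper triangle. -/
def IsBernoulliAdjacency {n : ℕ} {Ω : Type*} [MeasurableSpace Ω] (μ : Measure Ω)
    (P : Matrix (Fin n) (Fin n) ℝ) (A : Ω → Matrix (Fin n) (Fin n) ℝ) : Prop :=
  (∀ i j, Measurable fun ω => A ω i j) ∧
  (∀ ω i j, A ω i j = 0 ∨ A ω i j = 1) ∧
  (∀ ω i j, A ω i j = A ω j i) ∧
  (∀ i j, μ {ω | A ω i j = 1} = ENNReal.ofReal (P i j)) ∧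
  iIndepFun
    (fun (p : {p : Fin n × Fin n // p.1 ≤ p.2}) ω => A ω p.1.1 p.1.2) μ

/-- `A` is a random matrix with mutually independent Bernoulli entries with means `P`. -/
def IsBernoulliMatrix {N M : ℕ} {Ω : Type*} [MeasurableSpace Ω] (μ : Measure Ω)
    (P : Matrix (Fin N) (Fin M) ℝ) (A : Ω → Matrix (Fin N) (Fin M) ℝ) : Prop :=
  (∀ i j, Measurable fun ω => A ω i j) ∧
  (∀ ω i j, A ω i j = 0 ∨ A ω i j = 1) ∧
  (∀ i j, μ {ω | A ω i j = 1} = ENNReal.ofReal (P i j)) ∧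
  iIndepFun (fun (p : Fin N × Fin M) ω => A ω p.1 p.2) μ

/-- `R` is a best rank-one approximation of `B` in Frobenius norm. -/
def IsRankOneApprox {m n : Type*} [Fintype m] [Fintype n] (B R : Matrix m n ℝ) : Prop :=
  R.rank ≤ 1 ∧ ∀ X : Matrix m n ℝ, X.rank ≤ 1 → frobSq (B - R) ≤ frobSq (B - X)

/-- Proportion of misclassified nodes (up to relabeling of communities). -/
noncomputable def errRate {n K : ℕ} (Z zstar : Fin n → Fin K) : ℝ :=
  ((sInf {m : ℕ | ∃ π : Equiv.Perm (Fin K),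
      m = (Finset.univ.filter fun i => π (Z i) ≠ zstar i).card} : ℕ) : ℝ) / (n : ℝ)

/-- The penalty `Pen(n,K)` with constants `H1, H2, H3`. -/
noncomputable def Pen (H1 H2 H3 : ℝ) (n K : ℕ) : ℝ :=
  H1 * n * K + H2 * K ^ 2 * Real.log n + H3 * n * Real.log K

/-- `Phat` is assembled from a minimizer of the penalized least-squares criterion over
the number of communities `K`, assignments `z`, and rank-one blocks `Θ`. -/
def IsPenalizedMin (n : ℕ) (Pen' : ℕ → ℝ) (A Phat : Matrix (Fin n) (Fin n) ℝ) : Prop :=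
  ∃ (K : ℕ) (_ : 1 ≤ K) (_ : K ≤ n) (z : Fin n → Fin K)
    (Θ : ∀ k l : Fin K, Matrix {i : Fin n // z i = k} {j : Fin n // z j = l} ℝ),
    (∀ k l, (Θ k l).rank = 1) ∧
    (∀ i j, Phat i j = Θ (z i) (z j) ⟨i, rfl⟩ ⟨j, rfl⟩) ∧
    (∀ (K' : ℕ), 1 ≤ K' → K' ≤ n → ∀ (z' : Fin n → Fin K')
      (Θ' : ∀ k l : Fin K', Matrix {i : Fin n // z' i = k} {j : Fin n // z' j = l} ℝ),
      (∀ k l, (Θ' k l).rank = 1) →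
      (∑ k, ∑ l, frobSq (Mblock A z k l - Θ k l)) + Pen' K ≤
      (∑ k, ∑ l, frobSq (Mblock A z' k l - Θ' k l)) + Pen' K')

/-!
Extend `Λ^{(k,l)}` by zero to a vector `u_{k,l}` of `ℝⁿ`. The `j`-th column of `P` is
`∑ₖ V_{j,k} u_{k,z(j)}`, so `S_l ⊆ span {u_{k,l}}ₖ`. Conversely, A1* for community `l` makes the
rows of `(V_{j,k})_{z(j) = l}` span `ℝᴷ`; the combination of rows giving the `k`-th unit vector,
applied to the columns of `P` in community `l`, produces `u_{k,l}`. So `S_l = span {u_{k,l}}ₖ`,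
and the `K²` vectors `u_{k,l}` are independent: for different `k` their supports are disjoint,
for fixed `k` they are the independent `Λ^{(k,·)}`.
-/

theorem Matrix.vecMul_surjective_of_linearIndependent_col {m n K : Type*} [Fintype m]
    [Fintype n] [Field K] {A : Matrix m n K}
    (hA : LinearIndependent K A.col) : Function.Surjective A.vecMul := by
  classical
  obtain ⟨g, hg⟩ := A.mulVecLin.exists_leftInverse_of_injective
    (LinearMap.ker_eq_bot.2 (mulVec_injective_iff.2 hA))
  refine vecMul_surjective_iff_exists_left_inverse.2 ⟨LinearMap.toMatrix' g, ?_⟩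
  rw [← LinearMap.toMatrix'_toLin' A, ← LinearMap.toMatrix'_comp, Matrix.toLin'_apply', hg,
    LinearMap.toMatrix'_id]

theorem Submodule.span_range_eq_iSup_span_fiber {R M ι κ : Type*} [Semiring R]
    [AddCommMonoid M] [Module R M] (f : ι → M) (z : ι → κ) :
    span R (Set.range f) = ⨆ l, span R {c | ∃ j, z j = l ∧ c = f j} := by
  rw [← span_iUnion]
  congr
  ext
  simp [eq_comm]

theorem Submodule.iSup_span_range_curry {R M κ ν : Type*} [Semiring R]
    [AddCommMonoid M] [Module R M] (u : κ → ν → M) :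
    ⨆ l, span R (Set.range fun k => u k l) = span R (Set.range fun p : κ × ν => u p.1 p.2) := by
  rw [← span_iUnion]
  congr
  ext
  simp only [Set.mem_iUnion, Set.mem_range, Prod.exists]
  exact exists_comm

section PABM

variable {ι κ R : Type*} [DecidableEq κ] (z : ι → κ) (V : Matrix ι κ R)

/-- The popularity vector `Λ^{(k,l)}` of the paper, extended by zero outside community `k`. -/
def blockPopularity [Zero R] (k l : κ) : ι → R :=
  fun i => if z i = k then V i l else 0

theorem linearIndependent_blockPopularity [Ring R] [Fintype κ]
    (hV : ∀ k, LinearIndependent R fun l (i : {i // z i = k}) => V i l) :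
    LinearIndependent R fun p : κ × κ => blockPopularity z V p.1 p.2 := by
  refine Fintype.linearIndependent_iff.2 fun c hc ⟨k, l⟩ => ?_
  refine Fintype.linearIndependent_iff.1 (hV k) (fun l => c (k, l)) ?_ l
  funext i
  have hci := congrFun hc i.1
  simp only [Finset.sum_apply, Pi.smul_apply, smul_eq_mul, blockPopularity,
    Fintype.sum_prod_type, i.2, mul_ite, mul_zero, Pi.zero_apply] at hci ⊢
  simpa using hci

variable {z V}

theorem col_eq_sum_smul_blockPopularity [CommRing R] [Fintype κ] {P : Matrix ι ι R}
    (hP : ∀ i j, P i j = V i (z j) * V j (z i)) (j : ι) :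
    (fun i => P i j) = ∑ k, V j k • blockPopularity z V k (z j) := by
  funext i
  simp [blockPopularity, hP i j, mul_comm]

theorem blockPopularity_eq_sum_smul_col [CommRing R] [Fintype ι] {P : Matrix ι ι R}
    (hP : ∀ i j, P i j = V i (z j) * V j (z i)) {k l : κ} {a : {j // z j = l} → R}
    (ha : a ᵥ* Matrix.of (fun j k => V j k) = Pi.single k 1) :
    blockPopularity z V k l = ∑ j, a j • fun i => P i j := by
  funext i
  have hai := congrFun ha (z i)
  simp only [vecMul, dotProduct, of_apply, Pi.single_apply] at hai
  simp only [Finset.sum_apply, Pi.smul_apply, smul_eq_mul, hP, blockPopularity]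
  rw [Finset.sum_congr rfl fun j _ => by rw [j.2, mul_left_comm], ← Finset.mul_sum, hai,
    mul_ite, mul_one, mul_zero]

theorem span_community_cols_eq_span_blockPopularity [Field R] [Fintype ι] [Fintype κ]
    {P : Matrix ι ι R}
    (hP : ∀ i j, P i j = V i (z j) * V j (z i)) (l : κ)
    (hV : LinearIndependent R fun k (i : {i // z i = l}) => V i k) :
    Submodule.span R {c | ∃ j, z j = l ∧ c = fun i => P i j} =
      Submodule.span R (Set.range fun k => blockPopularity z V k l) := by
  apply le_antisymm <;> rw [Submodule.span_le]
  · rintro c ⟨j, rfl, rfl⟩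
    rw [col_eq_sum_smul_blockPopularity hP j]
    exact Submodule.sum_mem _ fun k _ => Submodule.smul_mem _ _ (Submodule.subset_span ⟨k, rfl⟩)
  · refine Set.range_subset_iff.2 fun k => ?_
    obtain ⟨a, ha⟩ := vecMul_surjective_of_linearIndependent_col hV (Pi.single k 1)
    rw [SetLike.mem_coe, blockPopularity_eq_sum_smul_col hP ha]
    exact Submodule.sum_mem _ fun j _ =>
      Submodule.smul_mem _ _ (Submodule.subset_span ⟨j, j.2, rfl⟩)

end PABM

/-- Under Assumption A1*, the PABM probability matrix has rank `K*²`; the columns of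
each community span a `K*`-dimensional subspace and these subspaces are independent. -/
theorem pabm_rank_and_subspaces
    (n Kstar : ℕ) (zstar : Fin n → Fin Kstar) (V : Matrix (Fin n) (Fin Kstar) ℝ)
    (Pstar : Matrix (Fin n) (Fin n) ℝ) (hPABM : IsPABM Pstar zstar V)
    (hA1star : ∀ k : Fin Kstar,
      LinearIndependent ℝ
        (fun l : Fin Kstar => fun i : {i : Fin n // zstar i = k} => V i.1 l))
    (S : Fin Kstar → Submodule ℝ (Fin n → ℝ))
    (hS : ∀ l, S l =
      Submodule.span ℝ {c : Fin n → ℝ | ∃ j, zstar j = l ∧ c = fun i => Pstar i j}) :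
    Pstar.rank = Kstar ^ 2 ∧
    (∀ l : Fin Kstar, Module.finrank ℝ (S l) = Kstar) ∧
    Module.finrank ℝ (⨆ l : Fin Kstar, S l : Submodule ℝ (Fin n → ℝ)) =
      ∑ l : Fin Kstar, Module.finrank ℝ (S l) ∧
    Module.finrank ℝ (⨆ l : Fin Kstar, S l : Submodule ℝ (Fin n → ℝ)) = Kstar ^ 2 := by
  obtain ⟨-, hP⟩ := hPABM
  have hindep := linearIndependent_blockPopularity zstar V hA1star
  have hS_eq (l : Fin Kstar) :
      S l = Submodule.span ℝ (Set.range fun k => blockPopularity zstar V k l) :=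
    (hS l).trans (span_community_cols_eq_span_blockPopularity hP l (hA1star l))
  have hdim_S (l : Fin Kstar) : Module.finrank ℝ (S l) = Kstar := by
    rw [hS_eq]
    exact (finrank_span_eq_card (hindep.comp (fun k => (k, l)) fun _ _ => congrArg Prod.fst)).trans
      (Fintype.card_fin Kstar)
  have hdim_sup : Module.finrank ℝ (⨆ l, S l : Submodule ℝ (Fin n → ℝ)) = Kstar ^ 2 := by
    rw [iSup_congr hS_eq, Submodule.iSup_span_range_curry, finrank_span_eq_card hindep]
    simp [sq]
  have hrank : Pstar.rank = Module.finrank ℝ (⨆ l, S l : Submodule ℝ (Fin n → ℝ)) := by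
    rw [rank_eq_finrank_span_cols, Submodule.span_range_eq_iSup_span_fiber _ zstar, iSup_congr hS]
    rfl
  refine ⟨hrank.trans hdim_sup, hdim_S, ?_, hdim_sup⟩
  simp [hdim_S, hdim_sup, sq]
end

section
/- Let P ∈ [0,1]^{n×n} and let Ξ = A − P where A is a random matrix with mutually independent entries A_{ij} ~ Bernoulli(P_{ij}). For every K ∈ {1,…,n} and every assignment Z : {1,…,n} → {1,…,K}, let H_{K,Z} ∈ ℝ^{n×n} be a fixed (deterministic) matrix with ‖H_{K,Z}‖_F = 1. Then for every t > 0, with probability at least 1 − 2e^{−t}, simultaneously for all K ∈ {1,…,n} and all assignments Z : {1,…,n} → {1,…,K}, one has ⟨Ξ, H_{K,Z}⟩² ≤ 2·ln n + 2·n·ln K + 2t, where ⟨X,Y⟩ = Tr(X^T·Y). -/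
open MeasureTheory Matrix ProbabilityTheory

/-! Each centred entry `A ω i j - P i j` lies in an interval of length one, so by Hoeffding's lemma
it is sub-Gaussian with variance proxy `1/4`; by independence `⟨Ξ, H⟩` is then sub-Gaussian with
variance proxy `‖H‖_F² / 4 = 1/4`, whence `P(⟨Ξ, H⟩² > b) ≤ 2 e^{-2b}`. For
`b = 2 log n + 2 n log K + 2 t` this is at most `2 e^{-t} / (n K^n)`, and a union bound over the
`K^n` assignments for each of the `n` values of `K` bounds the failure probability by `2 e^{-t}`. -/

open Real
open scoped NNReal

theorem Matrix.trace_transpose_mul_eq_sum {m n R : Type*} [Fintype m] [Fintype n] [CommSemiring R]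
    (B C : Matrix m n R) : trace (Bᵀ * C) = ∑ p : m × n, C p.1 p.2 * B p.1 p.2 := by
  rw [trace_mul_comm, ← sum_hadamard_eq, Fintype.sum_prod_type]
  rfl

section Probability

variable {Ω : Type*} [MeasurableSpace Ω] {μ : Measure Ω}

theorem MeasureTheory.ofReal_one_sub_le_of_measureReal_compl_le [IsProbabilityMeasure μ]
    {s : Set Ω} {δ : ℝ} (h : μ.real sᶜ ≤ δ) : ENNReal.ofReal (1 - δ) ≤ μ s := by
  have hcover : 1 ≤ μ.real s + μ.real sᶜ := by
    simpa [Set.union_compl_self] using measureReal_union_le (μ := μ) s sᶜ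
  exact ENNReal.ofReal_le_of_le_toReal (by rw [← measureReal_def]; linarith)

theorem MeasureTheory.integral_eq_of_forall_eq_zero_or_eq_one {B : Ω → ℝ} (hBm : Measurable B)
    (hB : ∀ ω, B ω = 0 ∨ B ω = 1) {p : ℝ} (hp : 0 ≤ p)
    (hμ : μ {ω | B ω = 1} = ENNReal.ofReal p) : μ[B] = p := by
  have hs : MeasurableSet {ω | B ω = 1} := hBm (measurableSet_singleton 1)
  have hind : B = {ω | B ω = 1}.indicator 1 := by
    funext ω
    rcases hB ω with h | h <;> simp [Set.indicator, h]
  conv_lhs => rw [hind]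
  rw [integral_indicator_one hs, measureReal_def, hμ, ENNReal.toReal_ofReal hp]

namespace ProbabilityTheory.HasSubgaussianMGF

theorem sum_mul_of_iIndepFun {ι : Type*} [Fintype ι] {X : ι → Ω → ℝ} (hind : iIndepFun X μ)
    {c : ℝ≥0} (hX : ∀ i, HasSubgaussianMGF (X i) c μ) (w : ι → ℝ) :
    HasSubgaussianMGF (fun ω ↦ ∑ i, w i * X i ω) ((∑ i, w i ^ 2).toNNReal * c) μ := by
  have hsum : HasSubgaussianMGF (fun ω ↦ ∑ i, w i * X i ω)
      (∑ i, ⟨w i ^ 2, sq_nonneg (w i)⟩ * c) μ := sum_of_iIndepFun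
    (hind.comp (fun i x ↦ w i * x) fun i ↦ measurable_const_mul (w i))
    fun i _ ↦ (hX i).const_mul (w i)
  convert hsum using 1
  ext1
  rw [NNReal.coe_mul, NNReal.coe_sum, Real.coe_toNNReal _ (by positivity), Finset.sum_mul]
  rfl

theorem measureReal_le_abs_le {X : Ω → ℝ} {c : ℝ≥0} (h : HasSubgaussianMGF X c μ) {ε : ℝ}
    (hε : 0 ≤ ε) : μ.real {ω | ε ≤ |X ω|} ≤ 2 * exp (-ε ^ 2 / (2 * c)) := by
  have hsplit : {ω | ε ≤ |X ω|} = {ω | ε ≤ X ω} ∪ {ω | ε ≤ (-X) ω} := by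
    ext ω
    simp [le_abs]
  calc μ.real {ω | ε ≤ |X ω|}
      ≤ μ.real {ω | ε ≤ X ω} + μ.real {ω | ε ≤ (-X) ω} := hsplit ▸ measureReal_union_le _ _
    _ ≤ exp (-ε ^ 2 / (2 * c)) + exp (-ε ^ 2 / (2 * c)) :=
        add_le_add (h.measure_ge_le hε) (h.neg.measure_ge_le hε)
    _ = 2 * exp (-ε ^ 2 / (2 * c)) := by ring

end ProbabilityTheory.HasSubgaussianMGF

namespace IsBernoulliMatrix

variable {N M : ℕ} {P : Matrix (Fin N) (Fin M) ℝ} {A : Ω → Matrix (Fin N) (Fin M) ℝ}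

theorem integral_apply (hA : IsBernoulliMatrix μ P A) (hP : ∀ i j, 0 ≤ P i j) (i : Fin N)
    (j : Fin M) : μ[fun ω ↦ A ω i j] = P i j :=
  integral_eq_of_forall_eq_zero_or_eq_one (hA.1 i j) (fun ω ↦ hA.2.1 ω i j) (hP i j) (hA.2.2.1 i j)

variable [IsProbabilityMeasure μ]

theorem hasSubgaussianMGF_sub (hA : IsBernoulliMatrix μ P A) (hP : ∀ i j, 0 ≤ P i j) (i : Fin N)
    (j : Fin M) : HasSubgaussianMGF (fun ω ↦ A ω i j - P i j) (1 / 4) μ := by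
  have hoeffding := hasSubgaussianMGF_of_mem_Icc (μ := μ) (hA.1 i j).aemeasurable (a := 0) (b := 1)
    (ae_of_all _ fun ω ↦ by rcases hA.2.1 ω i j with h | h <;> simp [h])
  rw [hA.integral_apply hP] at hoeffding
  convert hoeffding using 1
  ext
  norm_num

theorem hasSubgaussianMGF_trace (hA : IsBernoulliMatrix μ P A) (hP : ∀ i j, 0 ≤ P i j)
    (h : Matrix (Fin N) (Fin M) ℝ) :
    HasSubgaussianMGF (fun ω ↦ trace ((A ω - P)ᵀ * h)) ((frobSq h).toNNReal * (1 / 4)) μ := by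
  have hind : iIndepFun (fun (p : Fin N × Fin M) ω ↦ A ω p.1 p.2 - P p.1 p.2) μ :=
    hA.2.2.2.comp (fun p x ↦ x - P p.1 p.2) fun p ↦ measurable_sub_const _
  have hsum : HasSubgaussianMGF (fun ω ↦ ∑ p : Fin N × Fin M, h p.1 p.2 * (A ω - P) p.1 p.2)
      ((frobSq h).toNNReal * (1 / 4)) μ := by
    rw [frobSq, ← Fintype.sum_prod_type']
    exact HasSubgaussianMGF.sum_mul_of_iIndepFun hind
      (fun p ↦ hA.hasSubgaussianMGF_sub hP p.1 p.2) fun p ↦ h p.1 p.2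
  simpa only [trace_transpose_mul_eq_sum] using hsum

theorem measureReal_lt_trace_sq_le (hA : IsBernoulliMatrix μ P A) (hP : ∀ i j, 0 ≤ P i j)
    {h : Matrix (Fin N) (Fin M) ℝ} (hh : frobSq h = 1) (b : ℝ) :
    μ.real {ω | b < trace ((A ω - P)ᵀ * h) ^ 2} ≤ 2 * exp (-2 * b) := by
  rcases le_or_gt b 0 with hb | hb
  · have : 1 ≤ exp (-2 * b) := one_le_exp (by linarith)
    linarith [measureReal_le_one (μ := μ) (s := {ω | b < trace ((A ω - P)ᵀ * h) ^ 2})]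
  have htail := (hA.hasSubgaussianMGF_trace hP h).measureReal_le_abs_le (sqrt_nonneg b)
  refine (measureReal_mono fun ω hω ↦ ?_).trans (htail.trans_eq ?_)
  · exact (sqrt_le_sqrt hω.le).trans_eq (sqrt_sq_eq_abs _)
  · rw [hh, sq_sqrt hb.le, Real.toNNReal_one, one_mul]
    congr 2
    push_cast
    ring

end IsBernoulliMatrix

end Probability

theorem sum_Icc_sum_fun_div_le {c : ℝ} (hc : 0 ≤ c) (n : ℕ) :
    ∑ K ∈ Finset.Icc 1 n, ∑ _Z : Fin n → Fin K, c / (n * K ^ n) ≤ c := by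
  rcases n.eq_zero_or_pos with rfl | hn
  · simpa using hc
  refine le_of_eq ?_
  calc ∑ K ∈ Finset.Icc 1 n, ∑ _Z : Fin n → Fin K, c / (n * K ^ n)
      = ∑ _K ∈ Finset.Icc 1 n, c / n := Finset.sum_congr rfl fun K hK ↦ by
        have hK : (0 : ℝ) < K := by exact_mod_cast (Finset.mem_Icc.1 hK).1
        simp only [Finset.sum_const, Finset.card_univ, Fintype.card_fun, Fintype.card_fin,
          nsmul_eq_mul]
        push_cast
        field_simp
    _ = c := by
        rw [Finset.sum_const, Nat.card_Icc, nsmul_eq_mul, Nat.add_sub_cancel]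
        field_simp

theorem exp_neg_two_mul_le_div {n K : ℕ} (hK : 1 ≤ K) (hKn : K ≤ n) {t : ℝ} (ht : 0 ≤ t) :
    exp (-2 * (2 * log n + 2 * n * log K + 2 * t)) ≤ exp (-t) / (n * K ^ n) := by
  have hK0 : (1 : ℝ) ≤ K := by exact_mod_cast hK
  have hn0 : (1 : ℝ) ≤ n := by exact_mod_cast hK.trans hKn
  have hlogK := log_nonneg hK0
  have hlogn := log_nonneg hn0
  calc exp (-2 * (2 * log n + 2 * n * log K + 2 * t))
      ≤ exp (-t - log (n * K ^ n)) := by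
        rw [log_mul (by positivity) (by positivity), log_pow]
        gcongr
        nlinarith
    _ = exp (-t) / (n * K ^ n) := by rw [exp_sub, exp_log (by positivity)]

/-- Hoeffding-plus-union-bound step in the proof of Theorem 1 of Noroozi–Rimal–Pensky:
uniformly over all `K` and all assignments `Z`, the inner product of the Bernoulli noise
with a fixed unit-Frobenius-norm matrix `H K Z` is controlled. -/
theorem bernoulli_inner_product_uniform_bound
    (n : ℕ) (Ω : Type) [MeasurableSpace Ω] (μ : Measure Ω) [IsProbabilityMeasure μ]
    (P : Matrix (Fin n) (Fin n) ℝ) (hP : ∀ i j, P i j ∈ Set.Icc (0 : ℝ) 1)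
    (A : Ω → Matrix (Fin n) (Fin n) ℝ) (hA : IsBernoulliMatrix μ P A)
    (H : (K : ℕ) → (Fin n → Fin K) → Matrix (Fin n) (Fin n) ℝ)
    (hH : ∀ (K : ℕ) (Z : Fin n → Fin K), frobSq (H K Z) = 1) :
    ∀ t : ℝ, 0 < t →
      ENNReal.ofReal (1 - 2 * Real.exp (-t)) ≤
        μ {ω | ∀ K : ℕ, 1 ≤ K → K ≤ n → ∀ Z : Fin n → Fin K,
          Matrix.trace ((A ω - P)ᵀ * H K Z) ^ 2 ≤
            2 * Real.log n + 2 * n * Real.log K + 2 * t} := by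
  intro t ht
  let b : ℕ → ℝ := fun K ↦ 2 * log n + 2 * n * log K + 2 * t
  let bad : (K : ℕ) → (Fin n → Fin K) → Set Ω := fun K Z ↦
    {ω | b K < trace ((A ω - P)ᵀ * H K Z) ^ 2}
  have htail : ∀ K ∈ Finset.Icc 1 n, ∀ Z, μ.real (bad K Z) ≤ 2 * exp (-t) / (n * K ^ n) := by
    intro K hK Z
    rw [mul_div_assoc]
    refine (hA.measureReal_lt_trace_sq_le (fun i j ↦ (hP i j).1) (hH K Z) (b K)).trans ?_
    gcongr
    exact exp_neg_two_mul_le_div (Finset.mem_Icc.1 hK).1 (Finset.mem_Icc.1 hK).2 ht.le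
  have hcover : {ω | ∀ K, 1 ≤ K → K ≤ n → ∀ Z, trace ((A ω - P)ᵀ * H K Z) ^ 2 ≤ b K}ᶜ ⊆
      ⋃ K ∈ Finset.Icc 1 n, ⋃ Z, bad K Z := fun ω hω ↦ by
    simp only [Set.mem_compl_iff, Set.mem_ofPred_eq, not_forall, not_le] at hω
    obtain ⟨K, hK1, hKn, Z, hZ⟩ := hω
    exact Set.mem_biUnion (Finset.mem_Icc.2 ⟨hK1, hKn⟩) (Set.mem_iUnion.2 ⟨Z, hZ⟩)
  refine ofReal_one_sub_le_of_measureReal_compl_le ?_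
  calc μ.real _ ≤ ∑ K ∈ Finset.Icc 1 n, ∑ Z, μ.real (bad K Z) :=
        (measureReal_mono hcover (measure_ne_top μ _)).trans <|
          (measureReal_biUnion_finset_le _ _).trans <|
            Finset.sum_le_sum fun K _ ↦ measureReal_iUnion_fintype_le _
    _ ≤ ∑ K ∈ Finset.Icc 1 n, ∑ _Z : Fin n → Fin K, 2 * exp (-t) / (n * K ^ n) :=
        Finset.sum_le_sum fun K hK ↦ Finset.sum_le_sum fun Z _ ↦ htail K hK Z
    _ ≤ 2 * exp (-t) := sum_Icc_sum_fun_div_le (by positivity) n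
end

section
/- Let m_1, m_2 ≥ 1 and let A, B, R be real scalars. Let X be the symmetric (m_1+m_2)×(m_1+m_2) matrix with blocks A·1_{m_1}·1_{m_1}^T and B·1_{m_2}·1_{m_2}^T on the main diagonal and off-diagonal blocks R·1_{m_1}·1_{m_2}^T and R·1_{m_2}·1_{m_1}^T. Set S = A·m_1 + B·m_2 and D = m_1·m_2·(A·B − R²). Then for every real λ, det(X − λ·I) = (−1)^{m_1+m_2}·λ^{m_1+m_2−2}·(λ² − S·λ + D); consequently the only possibly nonzero eigenvalues of X are λ_{1,2} = S/2 ± (1/2)·√(S² − 4·D). Moreover, if S > 0, D ≥ 0 and 0 < α < 1, then λ_2 − α·λ_1 ≥ (D − α·S²)/S, where λ_1 ≥ λ_2 are these two eigenvalues. -/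
open MeasureTheory Matrix ProbabilityTheory

/-! The block-constant matrix is `Z Θ Zᵀ`, where `Z` is the 0/1 membership matrix of the two
blocks and `Θ = !![A, R; R, B]`. Since `charpoly (Z M) = X ^ (n - 2) * charpoly (M Z)` for
rectangular `Z` and `M`, its characteristic polynomial is `X ^ (n - 2)` times that of the
`2 × 2` matrix `Θ ZᵀZ = Θ diag(m₁, m₂)`, whose trace is `S` and whose determinant is `D`.
The eigenvalue formula is then the quadratic formula, valid because
`S² - 4D = (A m₁ - B m₂)² + 4 m₁ m₂ R² ≥ 0`. For the last claim, write `r = √(S² - 4D)`, so that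
`D = (S² - r²) / 4` and `r ≤ S`; multiplied by `4S`, the inequality becomes
`(S - r)² + 2αS(S - r) ≥ 0`. -/

open Polynomial

namespace Matrix

variable {ι κ R : Type*} [Fintype ι] [DecidableEq κ] [CommRing R]

theorem one_submatrix_id_mul_one_submatrix (z : ι → κ) :
    (1 : Matrix κ κ R).submatrix id z * (1 : Matrix κ κ R).submatrix z id =
      diagonal fun k => ((Finset.univ.filter (z · = k)).card : R) := by
  ext k l
  simp only [mul_apply, submatrix_apply, id_eq, one_apply, diagonal_apply, boole_mul, ← ite_and,
    Finset.sum_boole]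
  split_ifs with hkl
  · subst hkl
    congr 3
    ext i
    exact ⟨And.right, fun h => ⟨h.symm, h⟩⟩
  · rw [Finset.filter_false_of_mem, Finset.card_empty, Nat.cast_zero]
    rintro i - ⟨rfl, rfl⟩
    exact hkl rfl

variable [DecidableEq ι]

theorem det_sub_smul_one (M : Matrix ι ι R) (t : R) :
    (M - t • 1).det = (-1) ^ Fintype.card ι * M.charpoly.eval t := by
  rw [eval_charpoly, ← det_neg, neg_sub, scalar_apply, smul_one_eq_diagonal]

variable [Fintype κ]

theorem charpoly_submatrix_self (Θ : Matrix κ κ R) (z : ι → κ)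
    (h : Fintype.card κ ≤ Fintype.card ι) :
    (Θ.submatrix z z).charpoly = X ^ (Fintype.card ι - Fintype.card κ) *
      (Θ * diagonal fun k => ((Finset.univ.filter (z · = k)).card : R)).charpoly := by
  have hZ : Θ.submatrix z z = (1 : Matrix κ κ R).submatrix z (Equiv.refl κ) *
      (Θ * (1 : Matrix κ κ R).submatrix (Equiv.refl κ) z) := by
    rw [mul_submatrix_one, one_submatrix_mul]
    rfl
  rw [hZ, charpoly_mul_comm_of_le _ _ h, Matrix.mul_assoc, Equiv.coe_refl,
    one_submatrix_id_mul_one_submatrix]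

end Matrix

section

variable {m₁ m₂ : ℕ}

def twoBlockLabel (m₁ m₂ : ℕ) : Fin m₁ ⊕ Fin m₂ → Fin 2 :=
  Sum.elim (fun _ => 0) (fun _ => 1)

theorem fromBlocks_const_eq_submatrix {α : Type*} (a b c d : α) :
    fromBlocks (of fun _ _ => a) (of fun _ _ => b) (of fun _ _ => c) (of fun _ _ => d) =
      !![a, b; c, d].submatrix (twoBlockLabel m₁ m₂) (twoBlockLabel m₁ m₂) := by
  ext (i | i) (j | j) <;> rfl

theorem card_twoBlockLabel_eq (k : Fin 2) :
    (Finset.univ.filter (twoBlockLabel m₁ m₂ · = k)).card = ![m₁, m₂] k := by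
  rw [Finset.card_filter, Fintype.sum_sum_type]
  fin_cases k <;> simp [twoBlockLabel]

theorem charpoly_fromBlocks_const {R : Type*} [CommRing R] [Nontrivial R] (a b c d : R)
    (h : 2 ≤ m₁ + m₂) :
    (fromBlocks (of fun _ _ => a) (of fun _ _ => b) (of fun _ _ => c)
      (of fun _ _ => d) : Matrix (Fin m₁ ⊕ Fin m₂) (Fin m₁ ⊕ Fin m₂) R).charpoly =
      X ^ (m₁ + m₂ - 2) * (X ^ 2 - C (a * m₁ + d * m₂) * X + C (m₁ * m₂ * (a * d - b * c))) := by
  rw [fromBlocks_const_eq_submatrix, charpoly_submatrix_self _ _ (by simpa using h)]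
  have hprod : !![a, b; c, d] * diagonal (fun k => ((![m₁, m₂] k : ℕ) : R)) =
      !![a * m₁, b * m₂; c * m₁, d * m₂] := by
    ext i j
    fin_cases i <;> fin_cases j <;> simp
  simp only [Fintype.card_sum, Fintype.card_fin, card_twoBlockLabel_eq, hprod, charpoly_fin_two,
    trace_fin_two_of, det_fin_two_of]
  congr 4
  ring

end

theorem eq_or_eq_of_sq_sub_mul_add_eq_zero {S D x : ℝ} (hΔ : 0 ≤ S ^ 2 - 4 * D)
    (hx : x ^ 2 - S * x + D = 0) :
    x = S / 2 + √(S ^ 2 - 4 * D) / 2 ∨ x = S / 2 - √(S ^ 2 - 4 * D) / 2 := by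
  have hdiscrim : discrim 1 (-S) D = √(S ^ 2 - 4 * D) * √(S ^ 2 - 4 * D) := by
    rw [Real.mul_self_sqrt hΔ, discrim]
    ring
  have := (quadratic_eq_zero_iff one_ne_zero hdiscrim x).1 (by linear_combination hx)
  simpa only [neg_neg, mul_one, add_div, sub_div] using this

theorem div_le_smaller_root_sub_mul_larger_root {S D α : ℝ} (hS : 0 < S) (hD : 0 ≤ D)
    (hα : 0 ≤ α) (hΔ : 0 ≤ S ^ 2 - 4 * D) :
    (D - α * S ^ 2) / S ≤
      (S / 2 - √(S ^ 2 - 4 * D) / 2) - α * (S / 2 + √(S ^ 2 - 4 * D) / 2) := by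
  set r := √(S ^ 2 - 4 * D)
  have hr : r ^ 2 = S ^ 2 - 4 * D := Real.sq_sqrt hΔ
  have hrS : r ≤ S := Real.sqrt_le_iff.2 ⟨hS.le, by linarith⟩
  have hgap : S * ((S / 2 - r / 2) - α * (S / 2 + r / 2)) - (D - α * S ^ 2) =
      ((S - r) ^ 2 + 2 * α * S * (S - r)) / 4 := by
    linear_combination (-1 / 4 : ℝ) * hr
  have hgap_nonneg : 0 ≤ (S - r) ^ 2 + 2 * α * S * (S - r) := by
    have := sub_nonneg.2 hrS
    positivity
  rw [div_le_iff₀' hS]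
  linarith

/-- Lemma 12 of Noroozi–Rimal–Pensky: nonzero eigenvalues of a two-by-two block
constant matrix, and the lower bound `λ₂ − α·λ₁ ≥ (D − α·S²)/S`. -/
theorem block_constant_matrix_eigenvalues (m1 m2 : ℕ) (hm1 : 1 ≤ m1) (hm2 : 1 ≤ m2)
    (A B R : ℝ)
    (X : Matrix (Fin m1 ⊕ Fin m2) (Fin m1 ⊕ Fin m2) ℝ)
    (hX : X = Matrix.fromBlocks (Matrix.of fun _ _ => A) (Matrix.of fun _ _ => R)
        (Matrix.of fun _ _ => R) (Matrix.of fun _ _ => B))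
    (S D : ℝ) (hS : S = A * m1 + B * m2) (hD : D = m1 * m2 * (A * B - R ^ 2)) :
    (∀ lam : ℝ, Matrix.det (X - lam • 1) =
        (-1) ^ (m1 + m2) * lam ^ (m1 + m2 - 2) * (lam ^ 2 - S * lam + D)) ∧
    (∀ lam : ℝ, lam ≠ 0 → Matrix.det (X - lam • 1) = 0 →
        lam = S / 2 + Real.sqrt (S ^ 2 - 4 * D) / 2 ∨
        lam = S / 2 - Real.sqrt (S ^ 2 - 4 * D) / 2) ∧
    (0 < S → 0 ≤ D → ∀ α : ℝ, 0 < α → α < 1 →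
        (D - α * S ^ 2) / S ≤
          (S / 2 - Real.sqrt (S ^ 2 - 4 * D) / 2) -
            α * (S / 2 + Real.sqrt (S ^ 2 - 4 * D) / 2)) := by
  have hdet (lam : ℝ) : (X - lam • 1).det =
      (-1) ^ (m1 + m2) * lam ^ (m1 + m2 - 2) * (lam ^ 2 - S * lam + D) := by
    rw [hX, det_sub_smul_one, charpoly_fromBlocks_const _ _ _ _ (by omega)]
    simp only [eval_mul, eval_pow, eval_X, eval_add, eval_sub, eval_C, Fintype.card_sum,
      Fintype.card_fin, hS, hD]
    ring
  have hΔ : 0 ≤ S ^ 2 - 4 * D := by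
    have : S ^ 2 - 4 * D = (A * m1 - B * m2) ^ 2 + 4 * m1 * m2 * R ^ 2 := by
      rw [hS, hD]
      ring
    rw [this]
    positivity
  refine ⟨hdet, fun lam hlam hzero => eq_or_eq_of_sq_sub_mul_add_eq_zero hΔ ?_,
    fun hSpos hDnn α hα _ => div_le_smaller_root_sub_mul_larger_root hSpos hDnn hα.le hΔ⟩
  simpa [hdet, hlam] using hzero
end
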